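/- Let 0 ≤ j ≤ m−1 and let a_{j+1},…,a_m be real polynomials. Define Ã_{j+1} := (−1)^{j+1} a_{j+1} + Σ_{k=j+2}^m (−1)^k a_k ŝ_{j+2,k} on ℂ∖Δ_{j+2}, and Ã_j(z) := ∫ Ã_{j+1}(x)/(z−x) dσ_{j+1}(x) for z ∈ ℂ∖Δ_{j+1}. Then Ã_j(z) = (−1)^j a_j(z) + Σ_{k=j+1}^m (−1)^k a_k(z) ŝ_{j+1,k}(z) for all z ∈ ℂ∖Δ_{j+1}, where a_j(z) := ∫ (a_{j+1}(z) − a_{j+1}(x))/(z−x) dσ_{j+1}(x) + Σ_{k=j+2}^m (−1)^{k−j+1} ∫ (a_k(z) − a_k(x))/(z−x) · ŝ_{j+2,k}(x) dσ_{j+1}(x) is a real polynomial with deg a_j ≤ (max_{j+1 ≤ k ≤ m} deg a_k) − 1. -/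

import Mathlib

open MeasureTheory Filter Topology

noncomputable section

/-- Cauchy transform of a finite positive Borel measure on `ℝ`. -/
def cauchyT (s : Measure ℝ) (z : ℂ) : ℂ := ∫ x, (z - (x : ℂ))⁻¹ ∂s

/-- Forward Nikishin functions: `nikAux σ g j = ŝ_{j, j+g}`. -/
def nikAux (σ : ℕ → Measure ℝ) : ℕ → ℕ → ℂ → ℂ
  | 0, j => cauchyT (σ j)
  | g + 1, j => fun z => ∫ x, nikAux σ g (j + 1) (x : ℂ) / (z - (x : ℂ)) ∂(σ j)

/-- Reversed Nikishin functions: `nikRevAux σ g k = ŝ_{k, k-g}`. -/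
def nikRevAux (σ : ℕ → Measure ℝ) : ℕ → ℕ → ℂ → ℂ
  | 0, k => cauchyT (σ k)
  | g + 1, k => fun z => ∫ x, nikRevAux σ g (k - 1) (x : ℂ) / (z - (x : ℂ)) ∂(σ k)

/-- `sHat σ j k = ŝ_{j,k}` (forward Nikishin function if `j ≤ k`, reversed one if `j > k`). -/
def sHat (σ : ℕ → Measure ℝ) (j k : ℕ) : ℂ → ℂ :=
  if j ≤ k then nikAux σ (k - j) j else nikRevAux σ (j - k) j

/-- The branch of `√((z-a)(z-b))` holomorphic on `ℂ ∖ [a,b]` and positive for `z > b`. -/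
def sqrtBr (a b : ℝ) (z : ℂ) : ℂ :=
  Complex.exp ((Complex.log (z - (a : ℂ)) + Complex.log (z - (b : ℂ))) / 2)

/-- Radon–Nikodym derivative w.r.t. Lebesgue measure, as a real valued function. -/
def rnd (μ : Measure ℝ) (x : ℝ) : ℝ := (μ.rnDeriv volume x).toReal

/-- Szegő's condition on `[a,b]`. -/
def SzegoCond (μ : Measure ℝ) (a b : ℝ) : Prop :=
  IntegrableOn (fun x => Real.log (rnd μ x) / Real.sqrt ((b - x) * (x - a)))
    (Set.Ioo a b) volume

/-- The Szegő function of a measure on `[a,b]`. -/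
def szegoFn (μ : Measure ℝ) (a b : ℝ) (z : ℂ) : ℂ :=
  Complex.exp ((sqrtBr a b z / (2 * (Real.pi : ℂ))) *
    ∫ x in Set.Ioo a b,
      (Real.log (Real.sqrt ((b - x) * (x - a)) * rnd μ x) : ℂ) /
        (((x : ℂ) - z) * (Real.sqrt ((b - x) * (x - a)) : ℂ)))

/-- The value of the Szegő function at `∞`. -/
def szegoInf (μ : Measure ℝ) (a b : ℝ) : ℝ :=
  Real.exp (-(1 / (2 * Real.pi)) *
    ∫ x in Set.Ioo a b,
      Real.log (Real.sqrt ((b - x) * (x - a)) * rnd μ x) / Real.sqrt ((b - x) * (x - a)))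

/-- Logarithmic potential `V^μ(x) = ∫ log(1/|x-t|) dμ(t)`. -/
def logPotential (μ : Measure ℝ) (x : ℝ) : ℝ := ∫ t, Real.log (1 / |x - t|) ∂μ

/-- `Φ(z) = exp ∫ Log(z - t) dμ(t)`. -/
def PhiFn (μ : Measure ℝ) (z : ℂ) : ℂ := Complex.exp (∫ t, Complex.log (z - (t : ℂ)) ∂μ)

/-- Support of a Borel measure on `ℝ`. -/
def msupport (μ : Measure ℝ) : Set ℝ := {x | ∀ U : Set ℝ, IsOpen U → x ∈ U → 0 < μ U}

/-- Partial sums `P_j = p_1 + ⋯ + p_j`. -/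
def Psum (p : ℕ → ℝ) (j : ℕ) : ℝ := ∑ i ∈ Finset.Icc 1 j, p i

/-- The total potential appearing in the vector equilibrium problem. -/
def eqWt (p : ℕ → ℝ) (lam : ℕ → Measure ℝ) (j : ℕ) (x : ℝ) : ℝ :=
  logPotential (lam j) x -
    (1 / 2) * ((Psum p (j - 1) / Psum p j) * logPotential (lam (j - 1)) x +
      (Psum p (j + 1) / Psum p j) * logPotential (lam (j + 1)) x)

/-- The vector equilibrium problem. -/
def IsVectEquil (m : ℕ) (a b : ℕ → ℝ) (p : ℕ → ℝ) (lam : ℕ → Measure ℝ) (ω : ℕ → ℝ) : Prop :=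
  lam 0 = 0 ∧ lam (m + 1) = 0 ∧
  ∀ j, 1 ≤ j → j ≤ m →
    IsProbabilityMeasure (lam j) ∧
    msupport (lam j) ⊆ Set.Icc (a j) (b j) ∧
    (∀ x ∈ msupport (lam j), eqWt p lam j x = ω j) ∧
    (∀ x ∈ Set.Icc (a j) (b j), ω j ≤ eqWt p lam j x)

/-- `Δ_j` as a subset of `ℂ` (with the convention `Δ_j = ∅` for `j ∉ {1,…,m}`). -/
def cSeg (m : ℕ) (a b : ℕ → ℝ) (j : ℕ) : Set ℂ :=
  if 1 ≤ j ∧ j ≤ m then {w : ℂ | w.im = 0 ∧ a j ≤ w.re ∧ w.re ≤ b j} else ∅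

/-- `Δ_j` as a subset of `ℝ` (with the convention `Δ_j = ∅` for `j ∉ {1,…,m}`). -/
def rSeg (m : ℕ) (a b : ℕ → ℝ) (j : ℕ) : Set ℝ :=
  if 1 ≤ j ∧ j ≤ m then Set.Icc (a j) (b j) else ∅

/-- `|n| = n_1 + ⋯ + n_m`. -/
def nsum (m : ℕ) (n : ℕ → ℕ) : ℕ := ∑ i ∈ Finset.Icc 1 m, n i

/-- `η_{n,j} = n_1 + ⋯ + n_j`. -/
def etaIdx (n : ℕ → ℕ) (j : ℕ) : ℕ := ∑ i ∈ Finset.Icc 1 j, n i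

/-- The linear forms `A_{n,j} = (-1)^j a_{n,j} + Σ_{k=j+1}^m (-1)^k a_{n,k} ŝ_{j+1,k}`. -/
def formA (m : ℕ) (σ : ℕ → Measure ℝ) (A : ℕ → Polynomial ℝ) (j : ℕ) (z : ℂ) : ℂ :=
  (-1 : ℂ) ^ j * Polynomial.aeval z (A j) +
    ∑ k ∈ Finset.Icc (j + 1) m, (-1 : ℂ) ^ k * Polynomial.aeval z (A k) * sHat σ (j + 1) k z

/-- `f(z) = O(z^{-N})` as `z → ∞`, i.e. `z^N f(z)` is bounded near `∞`. -/
def BoundedWithOrder (f : ℂ → ℂ) (N : ℕ) : Prop :=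
  ∃ C R : ℝ, ∀ z : ℂ, R ≤ ‖z‖ → ‖z ^ N * f z‖ ≤ C

/-- Multi-level Hermite–Padé polynomials associated with the multi-index `n`. -/
def IsMLHP (m : ℕ) (σ : ℕ → Measure ℝ) (n : ℕ → ℕ) (A : ℕ → Polynomial ℝ) : Prop :=
  0 < nsum m n ∧
  (∃ j, j ≤ m ∧ A j ≠ 0) ∧
  (∀ j, j < m → (A j).natDegree < nsum m n) ∧
  (A m).Monic ∧ (A m).natDegree ≤ nsum m n ∧
  ∀ j, j < m → BoundedWithOrder (formA m σ A j) (n (j + 1) + 1)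

/-- `Q_{n,j}`: the monic polynomial collecting the zeros of `A_{n,j}` in `ℂ ∖ Δ_{j+1}`;
they are simple and lie in the interior of `Δ_j`. -/
def IsQpoly (m : ℕ) (a b : ℕ → ℝ) (σ : ℕ → Measure ℝ) (n : ℕ → ℕ)
    (A : ℕ → Polynomial ℝ) (j : ℕ) (Q : Polynomial ℝ) : Prop :=
  Q.Monic ∧ Q.natDegree = etaIdx n j ∧ Squarefree Q ∧
  (∀ z : ℂ, Polynomial.aeval z Q = 0 →
    z.im = 0 ∧ a j < z.re ∧ z.re < b j ∧ formA m σ A j z = 0) ∧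
  (∀ z : ℂ, z ∉ cSeg m a b (j + 1) → formA m σ A j z = 0 → Polynomial.aeval z Q = 0)

/-- `H_{n,j} = Q_{n,j+1} A_{n,j} / Q_{n,j}`, with `H_{n,m} ≡ (-1)^m`. -/
def Hform (m : ℕ) (σ : ℕ → Measure ℝ) (A : ℕ → Polynomial ℝ) (Q : ℕ → Polynomial ℝ)
    (j : ℕ) (z : ℂ) : ℂ :=
  if j = m then (-1 : ℂ) ^ m
  else Polynomial.aeval z (Q (j + 1)) * formA m σ A j z / Polynomial.aeval z (Q j)

/-- The normalizing constants `K_{n,j}`. -/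
def Kconst (m : ℕ) (σ : ℕ → Measure ℝ) (A : ℕ → Polynomial ℝ) (Q : ℕ → Polynomial ℝ)
    (j : ℕ) : ℝ :=
  if j = m then 1
  else (∫ x, (Polynomial.eval x (Q (j + 1))) ^ 2 *
      ‖Hform m σ A Q (j + 1) (x : ℂ)‖ /
      |Polynomial.eval x (Q j) * Polynomial.eval x (Q (j + 2))| ∂(σ (j + 1))) ^ (-(1 / 2) : ℝ)

/-- `κ_{n,j} = K_{n,j-1} / K_{n,j}`. -/
def kappaC (m : ℕ) (σ : ℕ → Measure ℝ) (A : ℕ → Polynomial ℝ) (Q : ℕ → Polynomial ℝ)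
    (j : ℕ) : ℝ :=
  Kconst m σ A Q (j - 1) / Kconst m σ A Q j

/-- The measure on `(a,b)` with the given Lebesgue density. -/
def densMeasure (a b : ℝ) (ρ : ℝ → ℝ) : Measure ℝ :=
  (volume.restrict (Set.Ioo a b)).withDensity fun x => ENNReal.ofReal (ρ x)

/-- Density of the measure whose Szegő function is `G_j`. -/
def szegoVecDensity (m : ℕ) (a b : ℕ → ℝ) (σ : ℕ → Measure ℝ) (G : ℕ → ℂ → ℂ)
    (j : ℕ) (x : ℝ) : ℝ :=
  rnd (σ j) x /
    ((if j = m then 1 else Real.sqrt (|x - b (j + 1)| * |x - a (j + 1)|)) *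
      ‖G (j - 1) (x : ℂ)‖ * ‖G (j + 1) (x : ℂ)‖)

/-- The measure whose Szegő function is `G_j`. -/
def szegoVecMeasure (m : ℕ) (a b : ℕ → ℝ) (σ : ℕ → Measure ℝ) (G : ℕ → ℂ → ℂ)
    (j : ℕ) : Measure ℝ :=
  densMeasure (a j) (b j) (szegoVecDensity m a b σ G j)

/-- The vector `(G_1,…,G_m)` of Szegő functions solving the system of boundary
value problems (3.1) of the paper. -/
def IsSzegoVector (m : ℕ) (a b : ℕ → ℝ) (σ : ℕ → Measure ℝ) (G : ℕ → ℂ → ℂ) : Prop :=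
  (∀ z, G 0 z = 1) ∧ (∀ z, G (m + 1) z = 1) ∧
  ∀ j, 1 ≤ j → j ≤ m → G j = szegoFn (szegoVecMeasure m a b σ G j) (a j) (b j)

/-- `G_j(∞)`. -/
def szegoVecInf (m : ℕ) (a b : ℕ → ℝ) (σ : ℕ → Measure ℝ) (G : ℕ → ℂ → ℂ) (j : ℕ) : ℝ :=
  szegoInf (szegoVecMeasure m a b σ G j) (a j) (b j)

/-- Geometric data of the system of intervals: nondegenerate, consecutive ones disjoint. -/
def IntervalData (m : ℕ) (a b : ℕ → ℝ) : Prop :=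
  (∀ j, 1 ≤ j → j ≤ m → a j < b j) ∧
  (∀ j, 1 ≤ j → j < m → Set.Icc (a j) (b j) ∩ Set.Icc (a (j + 1)) (b (j + 1)) = ∅)

/-- Basic data of a Nikishin system of measures. -/
def NikishinData (m : ℕ) (a b : ℕ → ℝ) (σ : ℕ → Measure ℝ) : Prop :=
  IntervalData m a b ∧
  ∀ j, 1 ≤ j → j ≤ m →
    IsFiniteMeasure (σ j) ∧ σ j (Set.Icc (a j) (b j))ᶜ = 0 ∧ (msupport (σ j)).Infinite

/-- `p_1 > 0`, `p_1 ≥ p_2 ≥ ⋯ ≥ p_m ≥ 0`, `p_1 + ⋯ + p_m = 1`. -/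
def IsAdmissibleP (m : ℕ) (p : ℕ → ℝ) : Prop :=
  0 < p 1 ∧ (∀ j, 1 ≤ j → j < m → p (j + 1) ≤ p j) ∧
  (∀ j, 1 ≤ j → j ≤ m → 0 ≤ p j) ∧ ∑ i ∈ Finset.Icc 1 m, p i = 1

/-- A straight ray sequence of distinct multi-indices with `n_j = p_j |n|`. -/
def IsStraightRay (m : ℕ) (p : ℕ → ℝ) (N : ℕ → ℕ → ℕ) : Prop :=
  (∀ k l : ℕ, (∀ j, 1 ≤ j → j ≤ m → N k j = N l j) → k = l) ∧
  ∀ k, 0 < nsum m (N k) ∧ ∀ j, 1 ≤ j → j ≤ m → (N k j : ℝ) = p j * (nsum m (N k) : ℝ)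

/-- `Δ_{j-1} ∪ Δ_{j+1} ⊆ ℝ`. -/
def nbrSet (m : ℕ) (a b : ℕ → ℝ) (j : ℕ) : Set ℝ :=
  rSeg m a b (j - 1) ∪ rSeg m a b (j + 1)

/-- `Δ_{j-1} ∪ Δ_{j+1} ⊆ ℂ`. -/
def cNbrSet (m : ℕ) (a b : ℕ → ℝ) (j : ℕ) : Set ℂ :=
  cSeg m a b (j - 1) ∪ cSeg m a b (j + 1)

/-- Membership in `C⁺(Δ⃗)`. -/
def MemCplus (m : ℕ) (a b : ℕ → ℝ) (f : ℕ → ℝ → ℝ) : Prop :=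
  ∀ j, 1 ≤ j → j ≤ m →
    ContinuousOn (f j) (nbrSet m a b j) ∧ ∀ x ∈ nbrSet m a b j, 0 < f j x

/-- The metric `d` on `C⁺(Δ⃗)`. -/
def dC (m : ℕ) (a b : ℕ → ℝ) (f g : ℕ → ℝ → ℝ) : ℝ :=
  sSup {r | ∃ j, 1 ≤ j ∧ j ≤ m ∧ ∃ x ∈ nbrSet m a b j, r = |Real.log (f j x / g j x)|}

/-- The sup norm on `C(Δ⃗)`. -/
def normC (m : ℕ) (a b : ℕ → ℝ) (f : ℕ → ℝ → ℝ) : ℝ :=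
  sSup {r | ∃ j, 1 ≤ j ∧ j ≤ m ∧ ∃ x ∈ nbrSet m a b j, r = |f j x|}

/-- The (positive) values of a Szegő function on the real axis. -/
def realSzego (μ : Measure ℝ) (a b : ℝ) (x : ℝ) : ℝ := ‖szegoFn μ a b (x : ℂ)‖

/-- Density used in the definition of the operator `T_w`. -/
def TwDensity (m : ℕ) (a b : ℕ → ℝ) (w : ℕ → ℝ → ℝ) (f : ℕ → ℝ → ℝ) (j : ℕ) (x : ℝ) : ℝ :=
  w j x / (Real.sqrt ((b j - x) * (x - a j)) *
    (if 2 ≤ j then f (j - 1) x else 1) * (if j + 1 ≤ m then f (j + 1) x else 1))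

/-- The operator `T_w` on `C⁺(Δ⃗)`. -/
def Tw (m : ℕ) (a b : ℕ → ℝ) (w : ℕ → ℝ → ℝ) (f : ℕ → ℝ → ℝ) : ℕ → ℝ → ℝ := fun j x =>
  if 1 ≤ j ∧ j ≤ m then
    realSzego (densMeasure (a j) (b j) (TwDensity m a b w f j)) (a j) (b j) x
  else 1

/-- Szegő-class vector weights for the operator `T_w`. -/
def IsSzegoWeight (m : ℕ) (a b : ℕ → ℝ) (w : ℕ → ℝ → ℝ) : Prop :=
  ∀ j, 1 ≤ j → j ≤ m → (∀ x ∈ Set.Icc (a j) (b j), 0 ≤ w j x) ∧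
    IntegrableOn (fun x => Real.log (w j x) / Real.sqrt ((b j - x) * (x - a j)))
      (Set.Ioo (a j) (b j)) volume

/-- Membership in `P_n`: monic real polynomials `Q_j` of degree `η_{n,j}` with no zeros
on `Δ_{j-1} ∪ Δ_{j+1}`. -/
def MemPn (m : ℕ) (a b : ℕ → ℝ) (n : ℕ → ℕ) (Qt : ℕ → Polynomial ℝ) : Prop :=
  Qt 0 = 1 ∧ Qt (m + 1) = 1 ∧
  ∀ j, 1 ≤ j → j ≤ m → (Qt j).Monic ∧ (Qt j).natDegree = etaIdx n j ∧
    ∀ z : ℂ, Polynomial.aeval z (Qt j) = 0 → z ∉ cNbrSet m a b j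

/-- Generic normalizing constants `K_j(Q⃗*)`. -/
def KcGen (m : ℕ) (σ : ℕ → Measure ℝ) (Qt Qs : ℕ → Polynomial ℝ) (H : ℕ → ℂ → ℂ)
    (j : ℕ) : ℝ :=
  if j = m then 1
  else (∫ x, (Polynomial.eval x (Qs (j + 1))) ^ 2 * ‖H (j + 1) (x : ℂ)‖ /
      |Polynomial.eval x (Qt j) * Polynomial.eval x (Qt (j + 2))| ∂(σ (j + 1))) ^ (-(1 / 2) : ℝ)

/-- `κ_j(Q⃗*) = K_{j-1}(Q⃗*) / K_j(Q⃗*)`. -/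
def kappaGen (m : ℕ) (σ : ℕ → Measure ℝ) (Qt Qs : ℕ → Polynomial ℝ) (H : ℕ → ℂ → ℂ)
    (j : ℕ) : ℝ :=
  KcGen m σ Qt Qs H (j - 1) / KcGen m σ Qt Qs H j

/-- The measure `ρ_j` with density `h̃_j σ_j' / (f_{j-1} f_{j+1})` on `Δ_j`. -/
def rhoMeas (m : ℕ) (a b : ℕ → ℝ) (σ : ℕ → Measure ℝ) (f : ℕ → ℝ → ℝ) (j : ℕ) : Measure ℝ :=
  densMeasure (a j) (b j) fun x =>
    (if j = m then 1 else (Real.sqrt (|x - b (j + 1)| * |x - a (j + 1)|))⁻¹) * rnd (σ j) x /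
      (f (j - 1) x * f (j + 1) x)

/-- The forms `A_j = a_j + Σ_{k=j+1}^m a_k ŝ_{j+1,k}` (without alternating signs). -/
def formGen (m : ℕ) (σ : ℕ → Measure ℝ) (aP : ℕ → Polynomial ℝ) (j : ℕ) (z : ℂ) : ℂ :=
  Polynomial.aeval z (aP j) +
    ∑ k ∈ Finset.Icc (j + 1) m, Polynomial.aeval z (aP k) * sHat σ (j + 1) k z

/-- Auxiliary iterated Cauchy kernel. -/
def kern (σ : ℕ → Measure ℝ) : ℕ → ℕ → ℝ → ℝ → ℝ
  | 0, _ => fun x y => 1 / (x - y)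
  | g + 1, i => fun x y => ∫ t, kern σ g (i + 1) t y / (x - t) ∂(σ i)

/-- The Cauchy biorthogonality kernel `K(x_1, x_m)`. -/
def biKernel (σ : ℕ → Measure ℝ) (m : ℕ) (x y : ℝ) : ℝ :=
  if m = 2 then 1 else kern σ (m - 2) 2 x y

/-- Walks of length `L` on the path graph `{1,…,m}` starting at `r`
(encoded as sequences vanishing after time `L`). -/
def walkSet (m L r : ℕ) : Set (ℕ → ℕ) :=
  {β | β 0 = r ∧ (∀ i, i ≤ L → 1 ≤ β i ∧ β i ≤ m) ∧
    (∀ i, i < L → β (i + 1) = β i + 1 ∨ β i = β (i + 1) + 1) ∧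
    ∀ i, L < i → β i = 0}

end

/-!
In each term write `a_k(x) = a_k(z) - (a_k(z) - a_k(x))`. The first parts integrate against
`ŝ_{j+2,k} dσ_{j+1} / (z - x)` to `a_k(z) ŝ_{j+1,k}(z)`. The divided differences
`(a_k(z) - a_k(x)) / (z - x)` are polynomials in `z` of degree `deg a_k - 1` with coefficients
polynomial in `x`, so their integrals are polynomials whose coefficients are moments of
`ŝ_{j+2,k} dσ_{j+1}`. These moments are finite because `ŝ_{j+2,k}` is continuous off `Δ_{j+2}`,
hence on `Δ_{j+1}`, and real because `ŝ_{j+2,k}` commutes with complex conjugation.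
-/

open Polynomial

section CauchyIntegral

variable {μ : Measure ℝ} {K : Set ℝ} {z : ℂ}

theorem ContinuousOn.div_sub_ofReal {f : ℝ → ℂ} (hf : ContinuousOn f K)
    (hz : z ∉ Complex.ofReal '' K) : ContinuousOn (fun x : ℝ => f x / (z - x)) K :=
  hf.div (continuousOn_const.sub Complex.continuous_ofReal.continuousOn)
    fun x hx => sub_ne_zero.2 fun h => hz ⟨x, hx, h.symm⟩

variable [IsFiniteMeasure μ]

theorem ContinuousOn.integrable_of_ae_mem {E : Type*} [NormedAddCommGroup E] {f : ℝ → E}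
    (hK : IsCompact K) (hμK : ∀ᵐ x ∂μ, x ∈ K) (hf : ContinuousOn f K) : Integrable f μ := by
  rw [← Measure.restrict_eq_self_of_ae_mem hμK]
  exact hf.integrableOn_compact hK

theorem continuousOn_integral_div_sub {f : ℝ → ℂ} (hK : IsCompact K) (hμK : ∀ᵐ x ∂μ, x ∈ K)
    (hf : ContinuousOn f K) :
    ContinuousOn (fun z : ℂ => ∫ x, f x / (z - x) ∂μ) (Complex.ofReal '' K)ᶜ := by
  intro z₀ hz₀
  have hKc : IsOpen (Complex.ofReal '' K)ᶜ :=
    (hK.image Complex.continuous_ofReal).isClosed.isOpen_compl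
  obtain ⟨U, hU, hUK, hUc⟩ := local_compact_nhds (hKc.mem_nhds hz₀)
  have hcont : ContinuousOn (fun p : ℂ × ℝ => f p.2 / (p.1 - p.2)) (U ×ˢ K) :=
    (hf.comp continuousOn_snd fun p hp => hp.2).div
      (continuousOn_fst.sub (Complex.continuous_ofReal.comp continuous_snd).continuousOn)
      fun p hp => sub_ne_zero.2 fun h => hUK hp.1 ⟨p.2, hp.2, h.symm⟩
  obtain ⟨M, hM⟩ := (hUc.prod hK).exists_bound_of_continuousOn hcont
  refine (continuousAt_of_dominated (bound := fun _ => M) ?_ ?_ (integrable_const M)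
    ?_).continuousWithinAt
  · filter_upwards [hU] with z hz
    exact ((hf.div_sub_ofReal (hUK hz)).integrable_of_ae_mem hK hμK).aestronglyMeasurable
  · filter_upwards [hU] with z hz
    filter_upwards [hμK] with x hx using hM (z, x) ⟨hz, hx⟩
  · filter_upwards [hμK] with x hx
    exact continuousAt_const.div (continuousAt_id.sub continuousAt_const)
      (sub_ne_zero.2 fun h => hz₀ ⟨x, hx, h.symm⟩)

theorem integral_aeval_mul_div_sub {g : ℝ → ℂ} (hK : IsCompact K) (hμK : ∀ᵐ x ∂μ, x ∈ K)
    (hz : z ∉ Complex.ofReal '' K) (hg : ContinuousOn g K) (P : ℝ[X]) (c : ℂ) :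
    ∫ x, c * aeval (x : ℂ) P * g x / (z - x) ∂μ =
      c * (aeval z P * ∫ x, g x / (z - x) ∂μ) -
        c * ∫ x, (aeval z P - aeval (x : ℂ) P) / (z - x) * g x ∂μ := by
  have hP : Continuous fun x : ℝ => aeval (x : ℂ) P :=
    P.continuous_aeval.comp Complex.continuous_ofReal
  rw [← mul_sub, ← integral_const_mul (aeval z P), ← integral_sub, ← integral_const_mul]
  · congr 1; funext x; ring
  · exact (hg.div_sub_ofReal hz).integrable_of_ae_mem hK hμK |>.const_mul _
  · exact ((continuousOn_const.sub hP.continuousOn).div_sub_ofReal hz).mul hg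
      |>.integrable_of_ae_mem hK hμK

theorem integral_add_sum_div_sub {ι : Type*} {s : Finset ι} {f₀ : ℝ → ℂ} {f : ι → ℝ → ℂ}
    (hK : IsCompact K) (hμK : ∀ᵐ x ∂μ, x ∈ K) (hz : z ∉ Complex.ofReal '' K)
    (h₀ : ContinuousOn f₀ K) (hf : ∀ i ∈ s, ContinuousOn (f i) K) :
    ∫ x, (f₀ x + ∑ i ∈ s, f i x) / (z - x) ∂μ =
      ∫ x, f₀ x / (z - x) ∂μ + ∑ i ∈ s, ∫ x, f i x / (z - x) ∂μ := by
  have hint : ∀ {g : ℝ → ℂ}, ContinuousOn g K → Integrable (fun x : ℝ => g x / (z - x)) μ :=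
    fun hg => (hg.div_sub_ofReal hz).integrable_of_ae_mem hK hμK
  simp only [add_div, Finset.sum_div]
  rw [integral_add (hint h₀) (integrable_finsetSum _ fun i hi => hint (hf i hi)),
    integral_finsetSum _ fun i hi => hint (hf i hi)]

end CauchyIntegral

section DividedDifference

theorem aeval_sub_aeval_eq_mul_sum {R A : Type*} [CommRing R] [CommRing A] [Algebra R A]
    (P : R[X]) (z w : A) :
    aeval z P - aeval w P = (z - w) * ∑ i ∈ Finset.range (P.natDegree + 1),
      algebraMap R A (P.coeff i) * ∑ t ∈ Finset.range i, z ^ t * w ^ (i - 1 - t) := by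
  rw [aeval_eq_sum_range, aeval_eq_sum_range, ← Finset.sum_sub_distrib, Finset.mul_sum]
  refine Finset.sum_congr rfl fun i _ => ?_
  rw [← smul_sub, ← geom_sum₂_mul, Algebra.smul_def]
  ring

/-- The polynomial `z ↦ ∫ (P z - P x) / (z - x) * w x ∂μ`, with coefficients given by the
moments of `w • μ`. -/
noncomputable def divDiffPoly (μ : Measure ℝ) (w : ℝ → ℝ) (P : ℝ[X]) : ℝ[X] :=
  ∑ i ∈ Finset.range (P.natDegree + 1), ∑ t ∈ Finset.range i,
    C (P.coeff i * ∫ x, x ^ (i - 1 - t) * w x ∂μ) * X ^ t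

theorem natDegree_divDiffPoly_le (μ : Measure ℝ) (w : ℝ → ℝ) (P : ℝ[X]) :
    (divDiffPoly μ w P).natDegree ≤ P.natDegree - 1 := by
  refine natDegree_sum_le_of_forall_le _ _ fun i hi =>
    natDegree_sum_le_of_forall_le _ _ fun t ht => (natDegree_C_mul_X_pow_le _ _).trans ?_
  rw [Finset.mem_range] at hi ht
  omega

theorem aeval_divDiffPoly {μ : Measure ℝ} [IsFiniteMeasure μ] {K : Set ℝ} {w : ℝ → ℝ}
    (hK : IsCompact K) (hμK : ∀ᵐ x ∂μ, x ∈ K) (hw : ContinuousOn w K) (P : ℝ[X]) {z : ℂ}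
    (hz : z ∉ Complex.ofReal '' K) :
    aeval z (divDiffPoly μ w P) = ∫ x, (aeval z P - aeval (x : ℂ) P) / (z - x) * w x ∂μ := by
  have hmom : ∀ q : ℕ, Integrable (fun x : ℝ => (x : ℂ) ^ q * w x) μ := fun q =>
    ((Complex.continuous_ofReal.pow q).continuousOn.mul
      (Complex.continuous_ofReal.comp_continuousOn hw)).integrable_of_ae_mem hK hμK
  calc aeval z (divDiffPoly μ w P)
      = ∑ i ∈ Finset.range (P.natDegree + 1), ∑ t ∈ Finset.range i,
          ∫ x, (P.coeff i : ℂ) * z ^ t * ((x : ℂ) ^ (i - 1 - t) * w x) ∂μ := by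
        simp only [divDiffPoly, map_sum, map_mul, aeval_C, aeval_X, map_pow, integral_const_mul,
          Complex.coe_algebraMap, ← integral_ofReal]
        refine Finset.sum_congr rfl fun i _ => Finset.sum_congr rfl fun t _ => by ring
    _ = ∫ x, ∑ i ∈ Finset.range (P.natDegree + 1), ∑ t ∈ Finset.range i,
          (P.coeff i : ℂ) * z ^ t * ((x : ℂ) ^ (i - 1 - t) * w x) ∂μ := by
        rw [integral_finsetSum _ fun i _ => integrable_finsetSum _ fun t _ =>
          (hmom _).const_mul _]
        exact Finset.sum_congr rfl fun i _ => (integral_finsetSum _ fun t _ =>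
          (hmom _).const_mul _).symm
    _ = ∫ x, (aeval z P - aeval (x : ℂ) P) / (z - x) * w x ∂μ := by
        refine integral_congr_ae ?_
        filter_upwards [hμK] with x hx
        have hzx : z - x ≠ 0 := sub_ne_zero.2 fun h => hz ⟨x, hx, h.symm⟩
        rw [aeval_sub_aeval_eq_mul_sum, mul_div_cancel_left₀ _ hzx, Finset.sum_mul]
        refine Finset.sum_congr rfl fun i _ => ?_
        simp only [Complex.coe_algebraMap, Finset.mul_sum, Finset.sum_mul]
        exact Finset.sum_congr rfl fun t _ => by ring

end DividedDifference

section Nikishin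

variable {σ : ℕ → Measure ℝ}

theorem conj_nikAux (g i : ℕ) (z : ℂ) :
    starRingEnd ℂ (nikAux σ g i z) = nikAux σ g i (starRingEnd ℂ z) := by
  induction g generalizing i z with
  | zero => simp only [nikAux, cauchyT, ← integral_conj, map_inv₀, map_sub, Complex.conj_ofReal]
  | succ g ih => simp only [nikAux, ← integral_conj, map_div₀, map_sub, Complex.conj_ofReal, ih]

theorem sHat_of_le {j k : ℕ} (h : j ≤ k) : sHat σ j k = nikAux σ (k - j) j := if_pos h

theorem sHat_self (j : ℕ) : sHat σ j j = cauchyT (σ j) := by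
  rw [sHat_of_le le_rfl, Nat.sub_self]
  rfl

theorem sHat_eq_integral {j k : ℕ} (h : j < k) (z : ℂ) :
    sHat σ j k z = ∫ x, sHat σ (j + 1) k x / (z - x) ∂σ j := by
  rw [sHat_of_le h.le, sHat_of_le h, show k - j = k - (j + 1) + 1 by omega]
  rfl

theorem ofReal_re_sHat {j k : ℕ} (h : j ≤ k) (x : ℝ) : ((sHat σ j k x).re : ℂ) = sHat σ j k x :=
  Complex.conj_eq_iff_re.1 (by rw [sHat_of_le h, conj_nikAux, Complex.conj_ofReal])

variable {m : ℕ} {a b : ℕ → ℝ}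

theorem cSeg_eq_image_ofReal {j : ℕ} (h1 : 1 ≤ j) (hjm : j ≤ m) :
    cSeg m a b j = Complex.ofReal '' Set.Icc (a j) (b j) := by
  rw [cSeg, if_pos ⟨h1, hjm⟩]
  ext w
  constructor
  · rintro ⟨him, ha, hb⟩
    exact ⟨w.re, ⟨ha, hb⟩, Complex.ext rfl (by simp [him])⟩
  · rintro ⟨x, hx, rfl⟩
    simpa using hx

namespace NikishinData

theorem isFiniteMeasure (hNik : NikishinData m a b σ) {i : ℕ} (h1 : 1 ≤ i) (him : i ≤ m) :
    IsFiniteMeasure (σ i) :=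
  (hNik.2 i h1 him).1

theorem ae_mem (hNik : NikishinData m a b σ) {i : ℕ} (h1 : 1 ≤ i) (him : i ≤ m) :
    ∀ᵐ x ∂σ i, x ∈ Set.Icc (a i) (b i) :=
  mem_ae_iff.2 (hNik.2 i h1 him).2.1

theorem mapsTo_ofReal (hNik : NikishinData m a b σ) {i : ℕ} (h1 : 1 ≤ i) (him : i < m) :
    Set.MapsTo Complex.ofReal (Set.Icc (a i) (b i))
      (Complex.ofReal '' Set.Icc (a (i + 1)) (b (i + 1)))ᶜ := by
  rintro x hx ⟨y, hy, hyx⟩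
  rw [Complex.ofReal_inj] at hyx
  subst hyx
  exact Set.eq_empty_iff_forall_notMem.1 (hNik.1.2 i h1 him) y ⟨hx, hy⟩

theorem continuousOn_nikAux (hNik : NikishinData m a b σ) (g : ℕ) {i : ℕ} (h1 : 1 ≤ i)
    (him : i + g ≤ m) : ContinuousOn (nikAux σ g i) (Complex.ofReal '' Set.Icc (a i) (b i))ᶜ := by
  induction g generalizing i with
  | zero =>
    have := hNik.isFiniteMeasure h1 him
    have h := continuousOn_integral_div_sub (f := fun _ => 1) isCompact_Icc (hNik.ae_mem h1 him)
      continuousOn_const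
    simp only [one_div] at h
    exact h
  | succ g ih =>
    have := hNik.isFiniteMeasure h1 (by omega)
    exact continuousOn_integral_div_sub isCompact_Icc (hNik.ae_mem h1 (by omega))
      ((ih (by omega) (by omega)).comp
        Complex.continuous_ofReal.continuousOn (hNik.mapsTo_ofReal h1 (by omega)))

theorem continuousOn_sHat (hNik : NikishinData m a b σ) {i k : ℕ} (h1 : 1 ≤ i) (hik : i < k)
    (hkm : k ≤ m) : ContinuousOn (fun x : ℝ => sHat σ (i + 1) k x) (Set.Icc (a i) (b i)) := by
  rw [sHat_of_le hik]
  exact (hNik.continuousOn_nikAux _ (by omega) (by omega)).comp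
    Complex.continuous_ofReal.continuousOn (hNik.mapsTo_ofReal h1 (by omega))

end NikishinData

end Nikishin

theorem neg_one_pow_mul_neg_one_pow_sub_add_one {R : Type*} [Monoid R] [HasDistribNeg R]
    {j k : ℕ} (h : j ≤ k) : (-1 : R) ^ j * (-1) ^ (k - j + 1) = -(-1) ^ k := by
  rw [← pow_add, show j + (k - j + 1) = k + 1 by omega, pow_succ, mul_neg_one]

section NikishinForm

/-- The polynomial `a_j` of the paper, built from `a_{j+1}, …, a_m`. -/
noncomputable def divDiffForm (m : ℕ) (σ : ℕ → Measure ℝ) (aP : ℕ → ℝ[X]) (j : ℕ) : ℝ[X] :=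
  divDiffPoly (σ (j + 1)) 1 (aP (j + 1)) + ∑ k ∈ Finset.Icc (j + 2) m,
    C ((-1) ^ (k - j + 1)) * divDiffPoly (σ (j + 1)) (fun x => (sHat σ (j + 2) k x).re) (aP k)

variable {m : ℕ} {a b : ℕ → ℝ} {σ : ℕ → Measure ℝ}

theorem natDegree_divDiffForm_le {j : ℕ} (hjm : j + 1 ≤ m) (aP : ℕ → ℝ[X]) :
    (divDiffForm m σ aP j).natDegree ≤
      (Finset.Icc (j + 1) m).sup (fun k => (aP k).natDegree) - 1 := by
  have hle : ∀ k ∈ Finset.Icc (j + 1) m, (aP k).natDegree - 1 ≤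
      (Finset.Icc (j + 1) m).sup (fun k => (aP k).natDegree) - 1 :=
    fun k hk => Nat.sub_le_sub_right (Finset.le_sup (f := fun k => (aP k).natDegree) hk) 1
  refine (natDegree_add_le _ _).trans (max_le ?_ ?_)
  · exact (natDegree_divDiffPoly_le _ _ _).trans (hle _ (Finset.mem_Icc.2 ⟨le_rfl, hjm⟩))
  · refine natDegree_sum_le_of_forall_le _ _ fun k hk => (natDegree_C_mul_le _ _).trans <|
      (natDegree_divDiffPoly_le _ _ _).trans (hle k ?_)
    rw [Finset.mem_Icc] at hk ⊢
    omega

theorem aeval_divDiffForm (hNik : NikishinData m a b σ) {j : ℕ} (hjm : j + 1 ≤ m)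
    (aP : ℕ → ℝ[X]) {z : ℂ} (hz : z ∉ cSeg m a b (j + 1)) :
    aeval z (divDiffForm m σ aP j) =
      (∫ x, (aeval z (aP (j + 1)) - aeval (x : ℂ) (aP (j + 1))) / (z - x) ∂σ (j + 1)) +
        ∑ k ∈ Finset.Icc (j + 2) m, (-1 : ℂ) ^ (k - j + 1) *
          ∫ x, (aeval z (aP k) - aeval (x : ℂ) (aP k)) / (z - x) * sHat σ (j + 2) k x
            ∂σ (j + 1) := by
  have := hNik.isFiniteMeasure le_add_self hjm
  have hσ := hNik.ae_mem le_add_self hjm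
  rw [cSeg_eq_image_ofReal le_add_self hjm] at hz
  rw [divDiffForm, map_add, aeval_divDiffPoly (w := 1) isCompact_Icc hσ continuousOn_const _ hz,
    map_sum]
  congr 1
  · simp
  refine Finset.sum_congr rfl fun k hk => ?_
  rw [Finset.mem_Icc] at hk
  rw [map_mul, aeval_divDiffPoly (w := fun x => (sHat σ (j + 2) k x).re) isCompact_Icc hσ
    (Complex.continuous_re.comp_continuousOn
    (hNik.continuousOn_sHat le_add_self (by omega) hk.2)) _ hz]
  simp [ofReal_re_sHat (σ := σ) (j := j + 2) (k := k) (by omega)]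

theorem integral_form_div_sub (hNik : NikishinData m a b σ) {j : ℕ} (hjm : j + 1 ≤ m)
    (aP : ℕ → ℝ[X]) {z : ℂ} (hz : z ∉ cSeg m a b (j + 1)) :
    ∫ x, ((-1 : ℂ) ^ (j + 1) * aeval (x : ℂ) (aP (j + 1)) +
        ∑ k ∈ Finset.Icc (j + 2) m, (-1 : ℂ) ^ k * aeval (x : ℂ) (aP k) * sHat σ (j + 2) k x) /
          (z - x) ∂σ (j + 1) =
      (-1 : ℂ) ^ j * aeval z (divDiffForm m σ aP j) +
        ∑ k ∈ Finset.Icc (j + 1) m, (-1 : ℂ) ^ k * aeval z (aP k) * sHat σ (j + 1) k z := by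
  have := hNik.isFiniteMeasure le_add_self hjm
  have hσ := hNik.ae_mem le_add_self hjm
  have hw : ∀ k ∈ Finset.Icc (j + 2) m,
      ContinuousOn (fun x : ℝ => sHat σ (j + 2) k x) (Set.Icc (a (j + 1)) (b (j + 1))) :=
    fun k hk => hNik.continuousOn_sHat le_add_self (by simp at hk; omega) (Finset.mem_Icc.1 hk).2
  have hP : ∀ P : ℝ[X], Continuous fun x : ℝ => aeval (x : ℂ) P :=
    fun P => P.continuous_aeval.comp Complex.continuous_ofReal
  have hIcc : insert (j + 1) (Finset.Icc (j + 2) m) = Finset.Icc (j + 1) m :=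
    Finset.insert_Icc_add_one_left_eq_Icc hjm
  rw [aeval_divDiffForm hNik hjm aP hz]
  rw [cSeg_eq_image_ofReal le_add_self hjm] at hz
  have e₁ := integral_aeval_mul_div_sub (g := fun _ => 1) isCompact_Icc hσ hz continuousOn_const
    (aP (j + 1)) ((-1) ^ (j + 1))
  simp only [mul_one, one_div] at e₁
  rw [integral_add_sum_div_sub (f₀ := fun x => (-1) ^ (j + 1) * aeval (x : ℂ) (aP (j + 1)))
      (f := fun k x => (-1) ^ k * aeval (x : ℂ) (aP k) * sHat σ (j + 2) k x) isCompact_Icc hσ hz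
      (continuousOn_const.mul (hP _).continuousOn)
      fun k hk => (continuousOn_const.mul (hP _).continuousOn).mul (hw k hk), e₁,
    Finset.sum_congr rfl fun k hk => integral_aeval_mul_div_sub isCompact_Icc hσ hz (hw k hk)
      (aP k) ((-1) ^ k),
    ← hIcc, Finset.sum_insert (by simp), sHat_self, cauchyT, mul_add, Finset.mul_sum,
    add_add_add_comm, ← Finset.sum_add_distrib]
  congr 1
  · ring
  refine Finset.sum_congr rfl fun k hk => ?_
  rw [Finset.mem_Icc] at hk
  rw [sHat_eq_integral (by omega), ← mul_assoc ((-1 : ℂ) ^ j),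
    neg_one_pow_mul_neg_one_pow_sub_add_one (by omega)]
  ring

end NikishinForm

/-- The inductive step in the proof of Lemma 2.1: the Cauchy transform of the form
`Ã_{j+1}` with respect to `σ_{j+1}` is again a form of the same type, with an
explicitly given polynomial `a_j` of degree at most `max deg a_k - 1`. -/
theorem form_cauchy_transform_expansion
    (m : ℕ) (hm : 2 ≤ m) (a b : ℕ → ℝ) (σ : ℕ → Measure ℝ)
    (hNik : NikishinData m a b σ)
    (j : ℕ) (hj : j ≤ m - 1) (aP : ℕ → Polynomial ℝ) :
    ∃ Pj : Polynomial ℝ,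
      Pj.natDegree ≤ (Finset.Icc (j + 1) m).sup (fun k => (aP k).natDegree) - 1 ∧
      (∀ z : ℂ, z ∉ cSeg m a b (j + 1) →
        Polynomial.aeval z Pj =
          (∫ x, (Polynomial.aeval z (aP (j + 1)) - Polynomial.aeval (x : ℂ) (aP (j + 1))) /
              (z - (x : ℂ)) ∂(σ (j + 1))) +
          ∑ k ∈ Finset.Icc (j + 2) m, (-1 : ℂ) ^ (k - j + 1) *
            ∫ x, (Polynomial.aeval z (aP k) - Polynomial.aeval (x : ℂ) (aP k)) /
              (z - (x : ℂ)) * sHat σ (j + 2) k (x : ℂ) ∂(σ (j + 1))) ∧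
      (∀ z : ℂ, z ∉ cSeg m a b (j + 1) →
        (∫ x, ((-1 : ℂ) ^ (j + 1) * Polynomial.aeval (x : ℂ) (aP (j + 1)) +
            ∑ k ∈ Finset.Icc (j + 2) m, (-1 : ℂ) ^ k * Polynomial.aeval (x : ℂ) (aP k) *
              sHat σ (j + 2) k (x : ℂ)) / (z - (x : ℂ)) ∂(σ (j + 1))) =
          (-1 : ℂ) ^ j * Polynomial.aeval z Pj +
            ∑ k ∈ Finset.Icc (j + 1) m, (-1 : ℂ) ^ k * Polynomial.aeval z (aP k) *
              sHat σ (j + 1) k z) := by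
  have hjm : j + 1 ≤ m := by omega
  exact ⟨divDiffForm m σ aP j, natDegree_divDiffForm_le hjm aP,
    fun z hz => aeval_divDiffForm hNik hjm aP hz, fun z hz => integral_form_div_sub hNik hjm aP hz⟩
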